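/- arXiv:2102.05078 — 3 statements merged into one kernel-verified Lean document; each statement's English description precedes it below -/
import Mathlib

section
/- For α > 0 and |k| > 1, the derivative of ω_α satisfies ω_α'(k) < α·|c₀|, where c₀² = tanh(α)/α. -/
noncomputable def omegaA (α k : ℝ) : ℝ :=
  Real.sign k * Real.sqrt (α * k * Real.tanh (α * k))

/-!
Since `ω_α` is odd, its derivative is even, so we may take `k > 1`. Writing `u = α k`, we have
`ω_α(k) / k = α √(tanh u / u)`, and `ω_α'(k) < ω_α(k) / k` amounts to `u / cosh² u < tanh u`,
i.e. `2u < sinh 2u`. The same inequality says that `tanh x / x` is strictly decreasing on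
`(0, ∞)`, so `ω_α(k) / k < α √(tanh α / α) = α |c₀|` for `k > 1`.
-/

open Real Set

namespace Real

theorem hasDerivAt_tanh (x : ℝ) : HasDerivAt tanh (1 / cosh x ^ 2) x := by
  have h := (hasDerivAt_sinh x).div (hasDerivAt_cosh x) (cosh_pos x).ne'
  have htanh : tanh = sinh / cosh := funext tanh_eq_sinh_div_cosh
  rwa [← sq, ← sq, cosh_sq_sub_sinh_sq, ← htanh] at h

theorem tanh_pos {x : ℝ} (hx : 0 < x) : 0 < tanh x := by
  rw [tanh_eq_sinh_div_cosh]
  exact div_pos (sinh_pos_iff.mpr hx) (cosh_pos x)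

theorem div_cosh_sq_lt_tanh {x : ℝ} (hx : 0 < x) : x / cosh x ^ 2 < tanh x := by
  have h : 2 * x < 2 * sinh x * cosh x := by
    rw [← sinh_two_mul]; exact self_lt_sinh_iff.mpr (by positivity)
  rw [tanh_eq_sinh_div_cosh, div_lt_iff₀ (by positivity)]
  field_simp
  linarith

theorem strictAntiOn_tanh_div_self : StrictAntiOn (fun x => tanh x / x) (Ioi 0) := by
  have hderiv : ∀ x ∈ Ioi (0 : ℝ), HasDerivAt (fun x => tanh x / x)
      ((1 / cosh x ^ 2 * x - tanh x * 1) / x ^ 2) x := fun x hx =>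
    (hasDerivAt_tanh x).div (hasDerivAt_id x) (ne_of_gt hx)
  refine strictAntiOn_of_hasDerivWithinAt_neg (convex_Ioi 0)
    (fun x hx => (hderiv x hx).continuousAt.continuousWithinAt)
    (fun x hx => (hderiv x (interior_subset hx)).hasDerivWithinAt) fun x hx => ?_
  rw [interior_Ioi, mem_Ioi] at hx
  have := div_cosh_sq_lt_tanh hx
  apply div_neg_of_neg_of_pos _ (by positivity)
  rw [mul_one, one_div_mul_eq_div]
  linarith

end Real

section omegaA

variable {α k : ℝ}

theorem omegaA_of_pos (α : ℝ) (hk : 0 < k) : omegaA α k = √(α * k * tanh (α * k)) := by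
  rw [omegaA, sign_of_pos hk, one_mul]

theorem omegaA_neg (α k : ℝ) : omegaA α (-k) = -omegaA α k := by
  simp only [omegaA, sign_neg, mul_neg, tanh_neg, neg_mul, neg_neg]

theorem deriv_omegaA_neg (α k : ℝ) : deriv (omegaA α) (-k) = deriv (omegaA α) k := by
  have hodd : omegaA α = fun x => -omegaA α (-x) := funext fun x => by rw [omegaA_neg, neg_neg]
  conv_rhs => rw [hodd]
  rw [deriv.fun_neg, deriv_comp_neg, neg_neg]

theorem omegaA_div_self (hα : 0 < α) (hk : 0 < k) :
    omegaA α k / k = α * √(tanh (α * k) / (α * k)) := by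
  have hαk : 0 < α * k := mul_pos hα hk
  have hsq : α * k * tanh (α * k) = (α * k) ^ 2 * (tanh (α * k) / (α * k)) := by
    field_simp
  rw [omegaA_of_pos α hk, hsq, sqrt_mul (sq_nonneg _), sqrt_sq hαk.le]
  field_simp

theorem deriv_omegaA_lt_div_self (hα : 0 < α) (hk : 0 < k) :
    deriv (omegaA α) k < omegaA α k / k := by
  have hu : 0 < α * k := mul_pos hα hk
  have hf : 0 < α * k * tanh (α * k) := mul_pos hu (tanh_pos hu)
  have hlin : HasDerivAt (fun x => α * x) α k := by simpa using (hasDerivAt_id k).const_mul α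
  have hderiv : HasDerivAt (fun x => √(α * x * tanh (α * x)))
      ((α * tanh (α * k) + α * k * (1 / cosh (α * k) ^ 2 * α)) / (2 * √(α * k * tanh (α * k)))) k :=
    (hlin.mul ((hasDerivAt_tanh _).comp k hlin)).sqrt hf.ne'
  have hev : omegaA α =ᶠ[nhds k] fun x => √(α * x * tanh (α * x)) := by
    filter_upwards [eventually_gt_nhds hk] with x hx using omegaA_of_pos α hx
  rw [hev.deriv_eq, hderiv.deriv, omegaA_of_pos α hk, div_lt_div_iff₀ (by positivity) hk]
  have := mul_lt_mul_of_pos_left (div_cosh_sq_lt_tanh hu) hu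
  calc (α * tanh (α * k) + α * k * (1 / cosh (α * k) ^ 2 * α)) * k
      = α * k * tanh (α * k) + α * k * ((α * k) / cosh (α * k) ^ 2) := by ring
    _ < 2 * (α * k * tanh (α * k)) := by linarith
    _ = √(α * k * tanh (α * k)) * (2 * √(α * k * tanh (α * k))) := by
      rw [mul_left_comm _ 2, mul_self_sqrt hf.le]

end omegaA

theorem omegaA_deriv_lt (α : ℝ) (hα : 0 < α) (k : ℝ) (hk : 1 < |k|)
    (c₀ : ℝ) (hc₀ : c₀ ^ 2 = Real.tanh α / α) :
    deriv (omegaA α) k < α * |c₀| := by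
  wlog hk₁ : 1 < k generalizing k
  · rw [← deriv_omegaA_neg]
    exact this (-k) (by rwa [abs_neg]) (by cases lt_abs.mp hk <;> linarith)
  have hk₀ : 0 < k := one_pos.trans hk₁
  have hαk : 0 < α * k := mul_pos hα hk₀
  calc deriv (omegaA α) k < omegaA α k / k := deriv_omegaA_lt_div_self hα hk₀
    _ = α * √(tanh (α * k) / (α * k)) := omegaA_div_self hα hk₀
    _ < α * √(tanh α / α) := by
      refine mul_lt_mul_of_pos_left (sqrt_lt_sqrt ?_ ?_) hα
      · exact div_nonneg (tanh_pos hαk).le hαk.le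
      · exact strictAntiOn_tanh_div_self hα hαk (lt_mul_of_one_lt_right hα hk₁)
    _ = α * |c₀| := by rw [← hc₀, sqrt_sq_eq_abs]
end

section
/- Let α > 0, c₀ = √(tanh(α)/α) > 0, and let k(p) be the unique solution of ω_α(k) + ω_α(k+p) = −αc₀p. For every integer p with |p| ≥ 2, Ω₁(k(p)) ≠ 0, where Ω₁(k) = −αc₀k + ω_α(k) and ω_α(k) = sign(k)·√(αk·tanh(αk)). -/
noncomputable def OmegaBr (α : ℝ) (σ : ℝ) (k : ℝ) : ℝ :=
  -α * Real.sqrt (Real.tanh α / α) * k + σ * omegaA α k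

lemma tanh_add_lt {x y : ℝ} (hx : 0 < x) (hy : 0 < y) :
    Real.tanh (x + y) < Real.tanh x + Real.tanh y := by
  have hcx := Real.cosh_pos x
  have hcy := Real.cosh_pos y
  have hsx := Real.sinh_pos_iff.mpr hx
  have hsy := Real.sinh_pos_iff.mpr hy
  rw [Real.tanh_eq_sinh_div_cosh, Real.tanh_eq_sinh_div_cosh, Real.tanh_eq_sinh_div_cosh,
    Real.sinh_add, Real.cosh_add, div_add_div _ _ (ne_of_gt hcx) (ne_of_gt hcy)]
  rw [div_lt_div_iff₀ (by positivity) (by positivity)]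
  nlinarith [mul_pos hsx hsy, mul_pos hcx hcy,
    mul_pos (mul_pos hsx hcy) (mul_pos hsx hsy),
    mul_pos (mul_pos hcx hsy) (mul_pos hsx hsy)]

lemma tanh_nat_lt {α : ℝ} (hα : 0 < α) : ∀ n : ℕ, 2 ≤ n →
    Real.tanh (α * n) < n * Real.tanh α := by
  intro n hn
  induction n, hn using Nat.le_induction with
  | base =>
    have := tanh_add_lt hα hα
    push_cast
    rw [mul_comm α 2, two_mul, two_mul]
    exact this
  | succ n hn ih =>
    have hn1 : (1:ℝ) ≤ (n:ℝ) := by exact_mod_cast Nat.one_le_of_lt hn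
    have h1 : α * ((n : ℝ) + 1) = α * n + α := by ring
    push_cast
    rw [h1]
    have h2 := tanh_add_lt (show (0:ℝ) < α * n by nlinarith) hα
    calc Real.tanh (α * n + α) < Real.tanh (α * n) + Real.tanh α := h2
      _ < n * Real.tanh α + Real.tanh α := by linarith
      _ = ((n : ℝ) + 1) * Real.tanh α := by ring

theorem collision_value_ne_zero (α : ℝ) (hα : 0 < α) (K : ℝ → ℝ)
    (hK : ∀ p : ℝ, omegaA α (K p) + omegaA α (K p + p) =
      -(α * Real.sqrt (Real.tanh α / α) * p)) :
    ∀ p : ℤ, 2 ≤ |p| → OmegaBr α 1 (K (p : ℝ)) ≠ 0 := by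
  intro p hp heq
  set c := Real.sqrt (Real.tanh α / α) with hc
  have htanh : 0 < Real.tanh α := by
    rw [Real.tanh_eq_sinh_div_cosh]
    exact div_pos (Real.sinh_pos_iff.mpr hα) (Real.cosh_pos α)
  have hcpos : 0 < c := Real.sqrt_pos.mpr (by positivity)
  have hc2 : c ^ 2 = Real.tanh α / α := Real.sq_sqrt (by positivity)
  have hc2' : α * c ^ 2 = Real.tanh α := by
    rw [hc2]; field_simp
  have harg : ∀ x : ℝ, 0 ≤ α * x * Real.tanh (α * x) := by
    intro x
    rcases lt_trichotomy x 0 with h | h | h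
    · have h1 : α * x < 0 := by nlinarith
      have hs : Real.sinh (α * x) < 0 := by
        have := Real.sinh_lt_sinh.mpr (show α * x < 0 from h1)
        simpa using this
      have h2 : Real.tanh (α * x) < 0 := by
        rw [Real.tanh_eq_sinh_div_cosh]
        exact div_neg_of_neg_of_pos hs (Real.cosh_pos _)
      nlinarith
    · simp [h]
    · have h1 : 0 < α * x := by positivity
      have h2 : 0 < Real.tanh (α * x) := by
        rw [Real.tanh_eq_sinh_div_cosh]
        exact div_pos (Real.sinh_pos_iff.mpr h1) (Real.cosh_pos _)
      nlinarith
  have heq' : omegaA α (K (p : ℝ)) = α * c * K (p : ℝ) := by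
    have : -α * c * K (p : ℝ) + 1 * omegaA α (K (p : ℝ)) = 0 := heq
    linarith
  have h2 := hK (p : ℝ)
  have h3 : omegaA α (K (p : ℝ) + p) = -(α * c * (K (p : ℝ) + p)) := by
    rw [heq'] at h2; linarith
  have hzero : K (p : ℝ) + p = 0 := by
    set x := K (p : ℝ) + (p : ℝ) with hx
    by_contra hne
    rcases lt_or_gt_of_ne hne with h | h
    · have hs : Real.sign x = -1 := Real.sign_of_neg h
      have hle : omegaA α x ≤ 0 := by
        rw [omegaA, hs]; nlinarith [Real.sqrt_nonneg (α * x * Real.tanh (α * x))]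
      nlinarith [mul_pos (mul_pos hα hcpos) (neg_pos.mpr h)]
    · have hs : Real.sign x = 1 := Real.sign_of_pos h
      have hle : 0 ≤ omegaA α x := by
        rw [omegaA, hs]; nlinarith [Real.sqrt_nonneg (α * x * Real.tanh (α * x))]
      nlinarith [mul_pos (mul_pos hα hcpos) h]
  have hKp : K (p : ℝ) = -(p : ℝ) := by linarith
  rw [hKp] at heq'
  have hpnat : 2 ≤ p.natAbs := by
    rw [Int.abs_eq_natAbs] at hp; exact_mod_cast hp
  obtain ⟨n, hn2, hcase⟩ : ∃ n : ℕ, 2 ≤ n ∧ ((p:ℝ) = (n:ℝ) ∨ (p:ℝ) = -(n:ℝ)) := by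
    refine ⟨p.natAbs, hpnat, ?_⟩
    rcases le_or_gt 0 p with h0 | h0
    · left
      rw [Nat.cast_natAbs]
      exact_mod_cast (abs_of_nonneg h0).symm
    · right
      rw [Nat.cast_natAbs, abs_of_neg h0]
      push_cast
      ring
  have hnpos : (0:ℝ) < (n : ℝ) := by
    have : 0 < n := by omega
    exact_mod_cast this
  have hkey := tanh_nat_lt hα n hn2
  have hsq : α * (n : ℝ) * Real.tanh (α * n) = Real.tanh α * α * (n : ℝ)^2 := by
    have hteq : ∀ he2 : Real.sqrt (α * (n:ℝ) * Real.tanh (α * (n:ℝ))) = α * c * (n:ℝ), True → α * (n : ℝ) * Real.tanh (α * n) = Real.tanh α * α * (n : ℝ)^2 := by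
      intro hs _
      have hsqr := Real.sq_sqrt (harg (n : ℝ))
      rw [hs] at hsqr
      nlinarith [hc2']
    rcases hcase with hpe | hpe
    · rw [hpe] at heq'
      have hneg : (-(n:ℝ)) < 0 := by linarith
      rw [omegaA, Real.sign_of_neg hneg] at heq'
      have heven : α * (-(n:ℝ)) * Real.tanh (α * (-(n:ℝ))) = α * (n:ℝ) * Real.tanh (α * (n:ℝ)) := by
        rw [show α * (-(n:ℝ)) = -(α * n) by ring, Real.tanh_neg]; ring
      rw [heven] at heq'
      exact hteq (by linarith) trivial
    · rw [hpe, neg_neg] at heq'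
      rw [omegaA, Real.sign_of_pos hnpos] at heq'
      exact hteq (by linarith) trivial
  have heq2 : α * (n:ℝ) * (Real.tanh (α * n) - (n : ℝ) * Real.tanh α) = 0 := by
    linear_combination hsq
  rcases mul_eq_zero.mp heq2 with h | h
  · nlinarith
  · linarith
end

section
/- Let α > 0, c₀ = √(tanh(α)/α) > 0. The zeros of Ω₁(k) = −αc₀k + sign(k)·√(αk·tanh(αk)) are exactly k ∈ {−1, 0, 1}. -/
lemma hasDerivAt_tanh' (x : ℝ) :
    HasDerivAt Real.tanh (1 / Real.cosh x ^ 2) x := by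
  have h := (Real.hasDerivAt_sinh x).div (Real.hasDerivAt_cosh x)
    (ne_of_gt (Real.cosh_pos x))
  have hnum : Real.cosh x * Real.cosh x - Real.sinh x * Real.sinh x = 1 := by
    nlinarith [Real.cosh_sq_sub_sinh_sq x]
  rw [hnum] at h
  have hfun : Real.tanh = fun y => Real.sinh y / Real.cosh y :=
    funext fun y => Real.tanh_eq_sinh_div_cosh y
  rw [hfun]
  exact h

lemma tanhDiv_strictAnti :
    StrictAntiOn (fun x => Real.tanh x / x) (Set.Ioi (0:ℝ)) := by
  apply strictAntiOn_of_deriv_neg (convex_Ioi 0)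
  · have hc : Continuous Real.tanh := by
      have hfun : Real.tanh = fun y => Real.sinh y / Real.cosh y :=
        funext fun y => Real.tanh_eq_sinh_div_cosh y
      rw [hfun]
      exact Real.continuous_sinh.div Real.continuous_cosh
        (fun x => ne_of_gt (Real.cosh_pos x))
    exact ContinuousOn.div hc.continuousOn continuousOn_id
      (fun x hx => ne_of_gt hx)
  · intro x hx
    rw [interior_Ioi] at hx
    have hx0 : (0:ℝ) < x := hx
    have hd : HasDerivAt (fun y => Real.tanh y / y)
        ((1 / Real.cosh x ^ 2 * x - Real.tanh x * 1) / x ^ 2) x :=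
      (hasDerivAt_tanh' x).div (hasDerivAt_id x) (ne_of_gt hx0)
    rw [hd.deriv]
    apply div_neg_of_neg_of_pos _ (by positivity)
    have hch : (0:ℝ) < Real.cosh x := Real.cosh_pos x
    have hsh : 0 < Real.sinh x := Real.sinh_pos_iff.2 hx0
    have h1 : x < Real.sinh x * Real.cosh x :=
      lt_of_lt_of_le (Real.self_lt_sinh_iff.2 hx0)
        (le_mul_of_one_le_right hsh.le (Real.one_le_cosh x))
    rw [Real.tanh_eq_sinh_div_cosh]
    have heq2 : 1 / Real.cosh x ^ 2 * x - Real.sinh x / Real.cosh x * 1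
        = (x - Real.sinh x * Real.cosh x) / Real.cosh x ^ 2 := by
      field_simp
    rw [heq2]
    exact div_neg_of_neg_of_pos (by linarith) (by positivity)

lemma tanh_pos' {x : ℝ} (hx : 0 < x) : 0 < Real.tanh x := by
  rw [Real.tanh_eq_sinh_div_cosh]
  exact div_pos (Real.sinh_pos_iff.2 hx) (Real.cosh_pos x)

lemma omegaBr_pos_iff (α : ℝ) (hα : 0 < α) {k : ℝ} (hk : 0 < k) :
    OmegaBr α 1 k = 0 ↔ k = 1 := by
  have htα : 0 < Real.tanh α := tanh_pos' hα
  have htk : 0 < Real.tanh (α * k) := tanh_pos' (by positivity)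
  have hsq : Real.sqrt (Real.tanh α / α) ^ 2 = Real.tanh α / α :=
    Real.sq_sqrt (by positivity)
  constructor
  · intro h
    rw [OmegaBr, omegaA, Real.sign_of_pos hk] at h
    have heq : Real.sqrt (α * k * Real.tanh (α * k))
        = α * Real.sqrt (Real.tanh α / α) * k := by linarith
    have h2 : α * k * Real.tanh (α * k) = (α * Real.sqrt (Real.tanh α / α) * k) ^ 2 := by
      rw [← heq, Real.sq_sqrt (by positivity)]
    have h3 : α * k * Real.tanh (α * k) = α * Real.tanh α * k ^ 2 := by
      rw [h2]; rw [mul_pow, mul_pow, hsq]; field_simp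
    have h4 : Real.tanh (α * k) / (α * k) = Real.tanh α / α := by
      rw [div_eq_div_iff (by positivity) (ne_of_gt hα)]
      nlinarith
    have hinj := tanhDiv_strictAnti.injOn
      (Set.mem_Ioi.2 (mul_pos hα hk)) (Set.mem_Ioi.2 hα) h4
    exact mul_left_cancel₀ (ne_of_gt hα) (hinj.trans (mul_one α).symm)
  · rintro rfl
    rw [OmegaBr, omegaA, Real.sign_of_pos one_pos]
    have : Real.sqrt (α * 1 * Real.tanh (α * 1)) = α * Real.sqrt (Real.tanh α / α) := by
      rw [show α * 1 * Real.tanh (α * 1) = (α * Real.sqrt (Real.tanh α / α)) ^ 2 by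
        rw [mul_pow, hsq]; field_simp]
      exact Real.sqrt_sq (by positivity)
    rw [this]; ring

lemma omegaBr_odd (α k : ℝ) : OmegaBr α 1 (-k) = - OmegaBr α 1 k := by
  simp only [OmegaBr, omegaA, Real.sign_neg]
  have : α * -k * Real.tanh (α * -k) = α * k * Real.tanh (α * k) := by
    rw [show α * -k = -(α * k) by ring, Real.tanh_neg]; ring
  rw [this]; ring

theorem OmegaPos_zeros (α : ℝ) (hα : 0 < α) :
    ∀ k : ℝ, OmegaBr α 1 k = 0 ↔ k ∈ ({-1, 0, 1} : Set ℝ) := by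
  intro k
  rcases lt_trichotomy k 0 with hk | rfl | hk
  · have hk' : 0 < -k := by linarith
    rw [show k = -(-k) by ring, omegaBr_odd, neg_eq_zero, omegaBr_pos_iff α hα hk']
    simp only [Set.mem_insert_iff, Set.mem_singleton_iff]
    constructor
    · intro h; left; linarith
    · rintro (h | h | h) <;> linarith
  · simp [OmegaBr, omegaA, Real.sign_zero]
  · rw [omegaBr_pos_iff α hα hk]
    simp only [Set.mem_insert_iff, Set.mem_singleton_iff]
    constructor
    · intro h; right; right; exact h
    · rintro (h | h | h) <;> linarith
end
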